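/- (Fejér monotonicity of the algorithm.) In the setting of the algorithm described in the context, for every x* ∈ S* ∩ X, every k ∈ ℕ and every i ∈ {1,…,m}, one has ‖z_{i+1}^k − x*‖ ≤ ‖z_i^k − x*‖; consequently ‖x^{k+1} − x*‖ ≤ ‖x^k − x*‖ for all k, i.e., the sequence (x^k)_{k∈ℕ} is Fejér convergent to S* ∩ X, and hence (x^k) is bounded. -/

import Mathlib

open scoped RealInnerProductSpace
open Filter

/-- `T` is a monotone set-valued operator. -/
def IsMonotoneOp {n : ℕ}
    (T : EuclideanSpace ℝ (Fin n) → Set (EuclideanSpace ℝ (Fin n))) : Prop :=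
  ∀ x y u v, u ∈ T x → v ∈ T y → ⟪x - y, u - v⟫ ≥ 0

/-- `T` is a maximal monotone set-valued operator. -/
def IsMaximalMonotoneOp {n : ℕ}
    (T : EuclideanSpace ℝ (Fin n) → Set (EuclideanSpace ℝ (Fin n))) : Prop :=
  IsMonotoneOp T ∧
    ∀ x u, (∀ y v, v ∈ T y → ⟪x - y, u - v⟫ ≥ 0) → u ∈ T x

/-- The sequence `x` is Fejér convergent to the set `S`. -/
def FejerConvergent {n : ℕ}
    (x : ℕ → EuclideanSpace ℝ (Fin n)) (S : Set (EuclideanSpace ℝ (Fin n))) : Prop :=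
  ∀ q ∈ S, ∃ k₀ : ℕ, ∀ k ≥ k₀, ‖x (k + 1) - q‖ ≤ ‖x k - q‖
/-!
Every solution `x* ∈ S* ∩ X` lies in each half-space `H_i^k`: with `ū ∈ B_i(x̄)` and
`-A_i(x*) ∈ B_i(x*)`, monotonicity of `A_i` and of `B_i` gives
`⟪A_i(x̄) + ū, x̄ - x*⟫ ≥ 0`. A nearest-point projection onto a convex set does not increase
the distance to any point of that set, so both `P_{H_i^k}` and `P_X` move `z_i^k` no farther
from `x*`. Chaining over `i = 1, …, m` gives Fejér monotonicity of `x^k`, and a Fejér sequence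
stays in the ball around `x*` of radius `‖x^0 - x*‖`.
-/

section NearestPoint

variable {E : Type*} [NormedAddCommGroup E] [InnerProductSpace ℝ E]

theorem convex_setOf_inner_sub_nonpos (v a : E) : Convex ℝ {y : E | ⟪v, y - a⟫ ≤ 0} := by
  simpa only [inner_sub_right, sub_nonpos] using
    convex_halfSpace_le (f := fun y : E => ⟪v, y⟫) (innerₛₗ ℝ v).isLinear ⟪v, a⟫

theorem inner_sub_nearest_nonpos {K : Set E} (hK : Convex ℝ K) {w c q : E} (hc : c ∈ K)
    (hq : q ∈ K) (hmin : ∀ y ∈ K, ‖c - w‖ ≤ ‖y - w‖) : ⟪w - c, q - c⟫ ≤ 0 := by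
  have : Nonempty K := ⟨⟨c, hc⟩⟩
  have hbdd : BddBelow (Set.range fun y : K => ‖w - y‖) := ⟨0, by
    rintro _ ⟨y, rfl⟩
    exact norm_nonneg _⟩
  have hinf : ‖w - c‖ = ⨅ y : K, ‖w - y‖ :=
    le_antisymm (le_ciInf fun y => by simpa only [norm_sub_rev w] using hmin y y.2)
      (ciInf_le hbdd ⟨c, hc⟩)
  exact (norm_eq_iInf_iff_real_inner_le_zero hK hc).1 hinf q hq

theorem norm_nearest_sub_le {K : Set E} (hK : Convex ℝ K) {w c q : E} (hc : c ∈ K)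
    (hq : q ∈ K) (hmin : ∀ y ∈ K, ‖c - w‖ ≤ ‖y - w‖) : ‖c - q‖ ≤ ‖w - q‖ := by
  have hinner := inner_sub_nearest_nonpos hK hc hq hmin
  have hsq : ‖q - c‖ ^ 2 ≤ ‖w - q‖ ^ 2 := by
    have hexp := norm_sub_sq_real (w - c) (q - c)
    rw [sub_sub_sub_cancel_right] at hexp
    nlinarith [sq_nonneg ‖w - c‖]
  rw [norm_sub_rev]
  exact pow_le_pow_iff_left₀ (norm_nonneg _) (norm_nonneg _) two_ne_zero |>.1 hsq

end NearestPoint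

theorem inner_add_sub_nonpos_of_mem_zeros {n : ℕ}
    {A : EuclideanSpace ℝ (Fin n) → EuclideanSpace ℝ (Fin n)}
    {B : EuclideanSpace ℝ (Fin n) → Set (EuclideanSpace ℝ (Fin n))}
    (hA : ∀ x y, ⟪A x - A y, x - y⟫ ≥ 0) (hB : IsMonotoneOp B)
    {xs xb ub : EuclideanSpace ℝ (Fin n)} (hxs : -A xs ∈ B xs) (hub : ub ∈ B xb) :
    ⟪A xb + ub, xs - xb⟫ ≤ 0 := by
  have hAmono := hA xb xs
  have hBmono := hB xb xs ub (-A xs) hub hxs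
  have hsplit : A xb + ub = (A xb - A xs) + (ub - -A xs) := by abel
  rw [← neg_sub, inner_neg_right, hsplit, inner_add_left, real_inner_comm (xb - xs) (ub - -A xs)]
  linarith

theorem norm_projection_step_sub_le {n : ℕ}
    {A : EuclideanSpace ℝ (Fin n) → EuclideanSpace ℝ (Fin n)}
    {B : EuclideanSpace ℝ (Fin n) → Set (EuclideanSpace ℝ (Fin n))}
    (hA : ∀ x y, ⟪A x - A y, x - y⟫ ≥ 0) (hB : IsMonotoneOp B)
    {X : Set (EuclideanSpace ℝ (Fin n))} (hX : Convex ℝ X)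
    {PX : EuclideanSpace ℝ (Fin n) → EuclideanSpace ℝ (Fin n)}
    (hPX : ∀ w, PX w ∈ X ∧ ∀ y ∈ X, ‖PX w - w‖ ≤ ‖y - w‖)
    {xs xb ub z p : EuclideanSpace ℝ (Fin n)} (hxs : -A xs ∈ B xs) (hxsX : xs ∈ X)
    (hub : ub ∈ B xb) (hp : p ∈ {y | ⟪A xb + ub, y - xb⟫ ≤ 0})
    (hpmin : ∀ y ∈ {y | ⟪A xb + ub, y - xb⟫ ≤ 0}, ‖p - z‖ ≤ ‖y - z‖) :
    ‖PX p - xs‖ ≤ ‖z - xs‖ :=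
  calc ‖PX p - xs‖ ≤ ‖p - xs‖ := norm_nearest_sub_le hX (hPX p).1 hxsX (hPX p).2
    _ ≤ ‖z - xs‖ := norm_nearest_sub_le (convex_setOf_inner_sub_nonpos _ _) hp
        (inner_add_sub_nonpos_of_mem_zeros hA hB hxs hub) hpmin

theorem isBounded_range_of_norm_sub_succ_le {E : Type*} [SeminormedAddCommGroup E]
    {x : ℕ → E} {q : E} (h : ∀ k, ‖x (k + 1) - q‖ ≤ ‖x k - q‖) :
    Bornology.IsBounded (Set.range x) := by
  refine Metric.isBounded_closedBall (x := q) (r := ‖x 0 - q‖) |>.subset ?_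
  rintro _ ⟨k, rfl⟩
  rw [Metric.mem_closedBall, dist_eq_norm]
  exact antitone_nat_of_succ_le (f := fun k => ‖x k - q‖) h (Nat.zero_le k)

theorem algorithm_fejer_monotone_general {n m : ℕ}
    (A : ℕ → EuclideanSpace ℝ (Fin n) → EuclideanSpace ℝ (Fin n))
    (B : ℕ → EuclideanSpace ℝ (Fin n) → Set (EuclideanSpace ℝ (Fin n)))
    (hA_mono : ∀ i ∈ Finset.Icc 1 m, ∀ x y, ⟪A i x - A i y, x - y⟫ ≥ 0)
    (hB_max : ∀ i ∈ Finset.Icc 1 m, IsMaximalMonotoneOp (B i))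
    (Sstar : Set (EuclideanSpace ℝ (Fin n)))
    (hSstar : Sstar = ⋂ i ∈ Finset.Icc 1 m, {x | -A i x ∈ B i x})
    (X : Set (EuclideanSpace ℝ (Fin n)))
    (hXcv : Convex ℝ X)
    (hSX : (Sstar ∩ X).Nonempty)
    (θ δ : ℝ)
    (β : ℕ → ℝ)
    (R : ℝ)
    (x : ℕ → EuclideanSpace ℝ (Fin n))
    (z J xbar ubar : ℕ → ℕ → EuclideanSpace ℝ (Fin n))
    (α : ℕ → ℕ → ℝ)
    (p : ℕ → ℕ → EuclideanSpace ℝ (Fin n))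
    (PX : EuclideanSpace ℝ (Fin n) → EuclideanSpace ℝ (Fin n))
    (hPX : ∀ w, PX w ∈ X ∧ ∀ y ∈ X, ‖PX w - w‖ ≤ ‖y - w‖)
    (hz1 : ∀ k, z k 1 = x k)
    (hxk1 : ∀ k, x (k + 1) = z k (m + 1))
    (hstop : ∀ k, ∀ i ∈ Finset.Icc 1 m, z k i = J k i →
      z k (i + 1) = z k i ∧ xbar k i = z k i ∧
        ubar k i ∈ B i (z k i) ∧ ‖ubar k i‖ ≤ R)
    (hsearch : ∀ k, ∀ i ∈ Finset.Icc 1 m, z k i ≠ J k i →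
      ∃ j : ℕ, α k i = θ ^ j ∧
        xbar k i = α k i • J k i + (1 - α k i) • z k i ∧
        ubar k i ∈ B i (xbar k i) ∧ ‖ubar k i‖ ≤ R ∧
        ⟪A i (xbar k i) + ubar k i, z k i - J k i⟫ ≥
          (δ / β k) * ‖z k i - J k i‖ ^ 2 ∧
        ∀ j' < j, ∀ u ∈ B i (θ ^ j' • J k i + (1 - θ ^ j') • z k i), ‖u‖ ≤ R →
          ⟪A i (θ ^ j' • J k i + (1 - θ ^ j') • z k i) + u, z k i - J k i⟫ <
            (δ / β k) * ‖z k i - J k i‖ ^ 2)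
    (hp : ∀ k, ∀ i ∈ Finset.Icc 1 m,
      p k i ∈ {y : EuclideanSpace ℝ (Fin n) |
          ⟪A i (xbar k i) + ubar k i, y - xbar k i⟫ ≤ 0} ∧
        ∀ y ∈ {y : EuclideanSpace ℝ (Fin n) |
            ⟪A i (xbar k i) + ubar k i, y - xbar k i⟫ ≤ 0},
          ‖p k i - z k i‖ ≤ ‖y - z k i‖)
    (hznext : ∀ k, ∀ i ∈ Finset.Icc 1 m, z k (i + 1) = PX (p k i)) :
    (∀ xs ∈ Sstar ∩ X, ∀ k : ℕ, ∀ i ∈ Finset.Icc 1 m,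
        ‖z k (i + 1) - xs‖ ≤ ‖z k i - xs‖) ∧
      (∀ xs ∈ Sstar ∩ X, ∀ k : ℕ, ‖x (k + 1) - xs‖ ≤ ‖x k - xs‖) ∧
      FejerConvergent x (Sstar ∩ X) ∧
      Bornology.IsBounded (Set.range x) := by
  have inner_step : ∀ xs ∈ Sstar ∩ X, ∀ k, ∀ i ∈ Finset.Icc 1 m,
      ‖z k (i + 1) - xs‖ ≤ ‖z k i - xs‖ := by
    rintro xs ⟨hxsS, hxsX⟩ k i hi
    have hub : ubar k i ∈ B i (xbar k i) := by
      by_cases hzJ : z k i = J k i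
      · obtain ⟨-, hxb, hub, -⟩ := hstop k i hi hzJ
        rwa [hxb]
      · obtain ⟨j, -, -, hub, -⟩ := hsearch k i hi hzJ
        exact hub
    have hxs : -A i xs ∈ B i xs := Set.mem_iInter₂.1 (hSstar ▸ hxsS) i hi
    rw [hznext k i hi]
    exact norm_projection_step_sub_le (hA_mono i hi) (hB_max i hi).1 hXcv hPX hxs hxsX hub
      (hp k i hi).1 (hp k i hi).2
  have outer_step : ∀ xs ∈ Sstar ∩ X, ∀ k, ‖x (k + 1) - xs‖ ≤ ‖x k - xs‖ := by
    intro xs hxs k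
    have hanti : AntitoneOn (fun i => ‖z k i - xs‖) (Set.Icc 1 (m + 1)) :=
      antitoneOn_of_succ_le Set.ordConnected_Icc fun i _ hi hi1 =>
        inner_step xs hxs k i (Finset.mem_Icc.2 ⟨hi.1, by simpa using hi1.2⟩)
    rw [hxk1, ← hz1]
    exact hanti (by simp) (by simp) (by omega)
  exact ⟨inner_step, outer_step, fun q hq => ⟨0, fun k _ => outer_step q hq k⟩,
    hSX.elim fun q hq => isBounded_range_of_norm_sub_succ_le (outer_step q hq)⟩

theorem algorithm_fejer_monotone {n m : ℕ} (hm : 1 ≤ m)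
    (A : ℕ → EuclideanSpace ℝ (Fin n) → EuclideanSpace ℝ (Fin n))
    (B : ℕ → EuclideanSpace ℝ (Fin n) → Set (EuclideanSpace ℝ (Fin n)))
    (hA_cont : ∀ i ∈ Finset.Icc 1 m, Continuous (A i))
    (hA_mono : ∀ i ∈ Finset.Icc 1 m, ∀ x y, ⟪A i x - A i y, x - y⟫ ≥ 0)
    (hB_max : ∀ i ∈ Finset.Icc 1 m, IsMaximalMonotoneOp (B i))
    (Sstar : Set (EuclideanSpace ℝ (Fin n)))
    (hSstar : Sstar = ⋂ i ∈ Finset.Icc 1 m, {x | -A i x ∈ B i x})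
    (X : Set (EuclideanSpace ℝ (Fin n)))
    (hXne : X.Nonempty) (hXcl : IsClosed X) (hXcv : Convex ℝ X)
    (hXdom : ∀ i ∈ Finset.Icc 1 m, ∀ x ∈ X, (B i x).Nonempty)
    (hSX : (Sstar ∩ X).Nonempty)
    (θ δ : ℝ) (hθ : θ ∈ Set.Ioo (0 : ℝ) 1) (hδ : δ ∈ Set.Ioo (0 : ℝ) 1)
    (βlo βhi : ℝ) (hβlo : 0 < βlo) (hβle : βlo ≤ βhi)
    (β : ℕ → ℝ) (hβ : ∀ k, β k ∈ Set.Icc βlo βhi)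
    (R : ℝ) (hR : 0 < R)
    (x : ℕ → EuclideanSpace ℝ (Fin n))
    (z J xbar ubar : ℕ → ℕ → EuclideanSpace ℝ (Fin n))
    (α : ℕ → ℕ → ℝ)
    (p : ℕ → ℕ → EuclideanSpace ℝ (Fin n))
    (PX : EuclideanSpace ℝ (Fin n) → EuclideanSpace ℝ (Fin n))
    (hPX : ∀ w, PX w ∈ X ∧ ∀ y ∈ X, ‖PX w - w‖ ≤ ‖y - w‖)
    (hxX : ∀ k, x k ∈ X)
    (hzX : ∀ k, ∀ i ∈ Finset.Icc 1 (m + 1), z k i ∈ X)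
    (hz1 : ∀ k, z k 1 = x k)
    (hxk1 : ∀ k, x (k + 1) = z k (m + 1))
    (hα : ∀ k, ∀ i ∈ Finset.Icc 1 m, α k i ∈ Set.Ioc (0 : ℝ) 1)
    (hJ : ∀ k, ∀ i ∈ Finset.Icc 1 m,
      (β k)⁻¹ • (z k i - β k • A i (z k i) - J k i) ∈ B i (J k i))
    (hstop : ∀ k, ∀ i ∈ Finset.Icc 1 m, z k i = J k i →
      z k (i + 1) = z k i ∧ xbar k i = z k i ∧
        ubar k i ∈ B i (z k i) ∧ ‖ubar k i‖ ≤ R)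
    (hsearch : ∀ k, ∀ i ∈ Finset.Icc 1 m, z k i ≠ J k i →
      ∃ j : ℕ, α k i = θ ^ j ∧
        xbar k i = α k i • J k i + (1 - α k i) • z k i ∧
        ubar k i ∈ B i (xbar k i) ∧ ‖ubar k i‖ ≤ R ∧
        ⟪A i (xbar k i) + ubar k i, z k i - J k i⟫ ≥
          (δ / β k) * ‖z k i - J k i‖ ^ 2 ∧
        ∀ j' < j, ∀ u ∈ B i (θ ^ j' • J k i + (1 - θ ^ j') • z k i), ‖u‖ ≤ R →
          ⟪A i (θ ^ j' • J k i + (1 - θ ^ j') • z k i) + u, z k i - J k i⟫ <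
            (δ / β k) * ‖z k i - J k i‖ ^ 2)
    (hBne : ∀ k, ∀ i ∈ Finset.Icc 1 m, ∀ j : ℕ,
      ∃ u ∈ B i (θ ^ j • J k i + (1 - θ ^ j) • z k i), ‖u‖ ≤ R)
    (hp : ∀ k, ∀ i ∈ Finset.Icc 1 m,
      p k i ∈ {y : EuclideanSpace ℝ (Fin n) |
          ⟪A i (xbar k i) + ubar k i, y - xbar k i⟫ ≤ 0} ∧
        ∀ y ∈ {y : EuclideanSpace ℝ (Fin n) |
            ⟪A i (xbar k i) + ubar k i, y - xbar k i⟫ ≤ 0},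
          ‖p k i - z k i‖ ≤ ‖y - z k i‖)
    (hznext : ∀ k, ∀ i ∈ Finset.Icc 1 m, z k (i + 1) = PX (p k i)) :
    (∀ xs ∈ Sstar ∩ X, ∀ k : ℕ, ∀ i ∈ Finset.Icc 1 m,
        ‖z k (i + 1) - xs‖ ≤ ‖z k i - xs‖) ∧
      (∀ xs ∈ Sstar ∩ X, ∀ k : ℕ, ‖x (k + 1) - xs‖ ≤ ‖x k - xs‖) ∧
      FejerConvergent x (Sstar ∩ X) ∧
      Bornology.IsBounded (Set.range x) :=
  algorithm_fejer_monotone_general A B hA_mono hB_max Sstar hSstar X hXcv hSX θ δ β R x z J xbar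
    ubar α p PX hPX hz1 hxk1 hstop hsearch hp hznext
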